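/- Let σ be a finite sequence of signs in {+, −} whose last sign is −, with k minus signs (k ≥ 1) and k+s plus signs (k+s ≥ 0). Then the minimum n for which there exists a binary sequence x of length n with x_n = 0 and signature σ(x) = σ equals 3k + s, and this minimum does not depend on the order of the signs in σ among sequences ending in −. -/

import Mathlib

/-!
In a sequence ending in 0 every 1 is followed by an entry, so it contributes exactly one sign:
`n = |σ| + #zeros`. Each − sign is witnessed by a distinct 0 (the entry after its 1), so
`#zeros ≥ k` and `n ≥ (2k + s) + k = 3k + s`. Writing 1 for each + and 10 for each − attains
this bound, whatever the order of the signs.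
-/

/-- The signature of a binary sequence `x` of length `n`: scan consecutive pairs in order,
recording `true` (a plus sign) for each pair `(1,1)` and `false` (a minus sign) for each pair
`(1,0)`, ignoring pairs whose first entry is `0`. -/
def signSeq (n : ℕ) (x : Fin n → Bool) : List Bool :=
  (List.ofFn fun i : Fin (n - 1) =>
    if x ⟨i.val, by have := i.isLt; omega⟩ = true then
      some (x ⟨i.val + 1, by have := i.isLt; omega⟩)
    else none).reduceOption

def signList : List Bool → List Bool
  | [] => []
  | [_] => []
  | a :: b :: l => (if a then [b] else []) ++ signList (b :: l)

lemma signSeq_succ_succ (n : ℕ) (x : Fin (n + 2) → Bool) :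
    signSeq (n + 2) x = (if x 0 then [x 1] else []) ++ signSeq (n + 1) (Fin.tail x) := by
  unfold signSeq
  rw [List.ofFn_succ]
  cases h : x 0 <;> simp [h, Fin.tail] <;> rfl

lemma signSeq_eq_signList_ofFn :
    ∀ (n : ℕ) (x : Fin n → Bool), signSeq n x = signList (List.ofFn x)
  | 0, _ | 1, _ => rfl
  | n + 2, x => by
    rw [signSeq_succ_succ, signSeq_eq_signList_ofFn (n + 1)]
    simp only [List.ofFn_succ]
    rfl

lemma exists_signSeq_eq_iff_exists_signList_eq {σ : List Bool} (hσ : σ ≠ []) (n : ℕ) :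
    (∃ x : Fin n → Bool, (∀ i : Fin n, (i : ℕ) = n - 1 → x i = false) ∧ signSeq n x = σ) ↔
      ∃ L : List Bool, L.length = n ∧ L.getLast? = some false ∧ signList L = σ := by
  constructor
  · rintro ⟨x, hlast, rfl⟩
    rcases n with _ | n
    · exact absurd rfl hσ
    refine ⟨List.ofFn x, List.length_ofFn, ?_, (signSeq_eq_signList_ofFn _ x).symm⟩
    rw [List.getLast?_eq_getElem?, List.length_ofFn, List.getElem?_ofFn]
    simpa using hlast ⟨n, by omega⟩ rfl
  · rintro ⟨L, rfl, hlast, rfl⟩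
    refine ⟨L.get, fun i hi => ?_, by rw [signSeq_eq_signList_ofFn, List.ofFn_get]⟩
    simpa [List.getLast?_eq_getElem?, ← hi] using hlast

lemma signList_true_cons (L : List Bool) : signList (true :: L) = L.head?.toList ++ signList L := by
  cases L <;> simp [signList]

lemma signList_false_cons (L : List Bool) : signList (false :: L) = signList L := by
  cases L <;> simp [signList]

lemma length_eq_length_signList_add_count_false {L : List Bool} (hL : L.getLast? = some false) :
    L.length = (signList L).length + L.count false := by
  induction L using signList.induct with
  | case1 => simp at hL
  | case2 => simp_all [signList]
  | case3 a b l ih =>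
    rw [List.getLast?_cons_cons] at hL
    cases a <;> simp [signList, ih hL, List.count_cons] <;> omega

lemma count_false_signList_le_count_false_tail (L : List Bool) :
    (signList L).count false ≤ L.tail.count false := by
  induction L using signList.induct with
  | case1 | case2 => simp [signList]
  | case3 a b l ih => cases a <;> cases b <;> simp_all [signList, Nat.le_add_right_of_le]

lemma length_signList_add_count_false_le {L : List Bool} (hL : L.getLast? = some false) :
    (signList L).length + (signList L).count false ≤ L.length := by
  have htail := (List.tail_sublist L).count_le false
  have := count_false_signList_le_count_false_tail L
  rw [length_eq_length_signList_add_count_false hL]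
  omega

def expandSigns (σ : List Bool) : List Bool :=
  σ.flatMap fun b => if b then [true] else [true, false]

lemma length_expandSigns (σ : List Bool) :
    (expandSigns σ).length = σ.count true + 2 * σ.count false := by
  induction σ with
  | nil => rfl
  | cons b σ ih => cases b <;> simp_all [expandSigns] <;> omega

lemma head?_expandSigns_append_true_cons (σ L : List Bool) :
    (expandSigns σ ++ true :: L).head? = some true := by
  rcases σ with _ | ⟨b, σ⟩
  · rfl
  · cases b <;> rfl

-- The trailing `true :: L` guarantees that the 1 of every block is followed by an entry.
lemma signList_expandSigns_append_true_cons (σ L : List Bool) :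
    signList (expandSigns σ ++ true :: L) = σ ++ signList (true :: L) := by
  induction σ with
  | nil => rfl
  | cons b σ ih =>
    have hhead := head?_expandSigns_append_true_cons σ L
    cases b
    · simp_all [expandSigns, signList_true_cons, signList_false_cons]
    · simp_all [expandSigns, signList_true_cons]

lemma signList_expandSigns {σ : List Bool} (hσ : σ.getLast? = some false) :
    signList (expandSigns σ) = σ := by
  obtain ⟨σ₀, rfl⟩ := List.getLast?_eq_some_iff.mp hσ
  simpa [expandSigns, signList] using signList_expandSigns_append_true_cons σ₀ [false]

lemma getLast?_expandSigns {σ : List Bool} (hσ : σ.getLast? = some false) :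
    (expandSigns σ).getLast? = some false := by
  obtain ⟨σ₀, rfl⟩ := List.getLast?_eq_some_iff.mp hσ
  simp [expandSigns]

theorem taily_min_length_general (σ : List Bool) (k : ℕ) (s : ℤ)
    (hminus : σ.count false = k) (hplus : (σ.count true : ℤ) = (k : ℤ) + s) :
    ∃ m : ℕ, (m : ℤ) = 3 * (k : ℤ) + s ∧
      ∀ σ' : List Bool, σ'.Perm σ → σ'.getLast? = some false →
        IsLeast {n : ℕ | ∃ x : Fin n → Bool,
          (∀ i : Fin n, (i : ℕ) = n - 1 → x i = false) ∧ signSeq n x = σ'} m := by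
  refine ⟨σ.count true + 2 * k, by push_cast; omega, fun σ' hperm hlast => ?_⟩
  have hne : σ' ≠ [] := by rintro rfl; simp at hlast
  have htrue : σ'.count true = σ.count true := hperm.count_eq true
  have hfalse : σ'.count false = k := hperm.count_eq false ▸ hminus
  simp only [exists_signSeq_eq_iff_exists_signList_eq hne]
  constructor
  · refine ⟨expandSigns σ', ?_, getLast?_expandSigns hlast, signList_expandSigns hlast⟩
    rw [length_expandSigns, htrue, hfalse]
  · rintro n ⟨L, rfl, hL, rfl⟩
    have := length_signList_add_count_false_le hL
    have := List.count_true_add_count_false (signList L)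
    omega

/-- Lemma 3 (taily case): if `σ` is a signature whose last sign is a minus, with `k` minus
signs (`k ≥ 1`) and `k + s` plus signs (`k + s ≥ 0`), then the minimum length `n` of a binary
sequence ending in 0 with signature `σ` equals `3k + s`; moreover this minimum is the same
for every rearrangement of the signs of `σ` that also ends in a minus sign. -/
theorem taily_min_length (σ : List Bool) (k : ℕ) (s : ℤ)
    (hlast : σ.getLast? = some false) (hk : 1 ≤ k)
    (hminus : σ.count false = k) (hplus : (σ.count true : ℤ) = (k : ℤ) + s)
    (hks : 0 ≤ (k : ℤ) + s) :
    ∃ m : ℕ, (m : ℤ) = 3 * (k : ℤ) + s ∧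
      ∀ σ' : List Bool, σ'.Perm σ → σ'.getLast? = some false →
        IsLeast {n : ℕ | ∃ x : Fin n → Bool,
          (∀ i : Fin n, (i : ℕ) = n - 1 → x i = false) ∧ signSeq n x = σ'} m :=
  taily_min_length_general σ k s hminus hplus
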